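/- For every real number z > 0 that is not an integer, with n = ⌊z⌋, one has 1/Γ(z) = −(1/π) · Im ∫₀^∞ (e^{−t} − e_{n−1}(−t)) · ((−t : ℂ))^{−z} dt, where (−t)^{−z} is the principal branch of the complex power (so that for t > 0, (−t)^{−z} = t^{−z} e^{−iπz}). -/

import Mathlib

/-!
Write `R_n(t) = e^{-t} - e_{n-1}(-t)`. Since `R_{n+1}' = -R_n` and `R_{n+1}(0) = 0`, one gets
`|R_n(t)| ≤ t^n / n!` for `t ≥ 0`, while `R_n(t) = O(t^{n-1})` at infinity; hence the Mellin
transform `∫₀^∞ R_n(t) t^{s-1} dt` converges on the strip `-n < s < 1 - n`. Integrating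
`(R_{n+1}(t) t^s)' = -R_n(t) t^s + s R_{n+1}(t) t^{s-1}` over `(0, ∞)` shows that the transform
of `R_{n+1}` at `s` is the transform of `R_n` at `s + 1` divided by `s`, so by induction from
Euler's integral it equals `Γ(s)` (Cauchy–Saalschütz).

For `t > 0` the principal branch gives `(-t)^{-z} = t^{-z} e^{-iπz}`, so with `n = ⌊z⌋` the
integral is `Γ(1 - z) e^{-iπz}`, whose imaginary part is `-Γ(1 - z) sin(πz)`, and the reflection
formula `Γ(z) Γ(1 - z) = π / sin(πz)` finishes the proof.
-/

open MeasureTheory Real Filter Set Complex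

/-- Truncated exponential polynomial `e_n(x) = ∑_{k=0}^{n} x^k / k!`.
Note that `e_{n-1}(x)` corresponds to `∑ k in Finset.range n, x^k / k!`. -/
noncomputable def truncExpPrev (n : ℕ) (x : ℝ) : ℝ :=
  ∑ k ∈ Finset.range n, x ^ k / (k.factorial : ℝ)

open scoped Topology Nat

noncomputable def expNegRemainder (n : ℕ) (t : ℝ) : ℝ := Real.exp (-t) - truncExpPrev n (-t)

theorem hasDerivAt_pow_succ_div_factorial (n : ℕ) (x : ℝ) :
    HasDerivAt (fun y : ℝ => y ^ (n + 1) / (n + 1)!) (x ^ n / n !) x := by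
  refine ((hasDerivAt_pow (n + 1) x).div_const ((n + 1)! : ℝ)).congr_deriv ?_
  rw [Nat.add_sub_cancel, Nat.factorial_succ, Nat.cast_mul, Nat.cast_succ,
    mul_div_mul_left _ _ (by positivity)]

theorem hasDerivAt_truncExpPrev_succ (n : ℕ) (x : ℝ) :
    HasDerivAt (truncExpPrev (n + 1)) (truncExpPrev n x) x := by
  have h : truncExpPrev (n + 1) =
      fun y : ℝ => ∑ k ∈ Finset.range n, y ^ (k + 1) / (k + 1)! + 1 := by
    funext y
    simp [truncExpPrev, Finset.sum_range_succ']
  rw [h]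
  exact (HasDerivAt.fun_sum fun k _ => hasDerivAt_pow_succ_div_factorial k x).add_const 1

theorem truncExpPrev_succ_zero (n : ℕ) : truncExpPrev (n + 1) 0 = 1 := by
  simp [truncExpPrev, Finset.sum_range_succ']

theorem continuous_expNegRemainder (n : ℕ) : Continuous (expNegRemainder n) := by
  unfold expNegRemainder truncExpPrev
  fun_prop

theorem expNegRemainder_succ_zero (n : ℕ) : expNegRemainder (n + 1) 0 = 0 := by
  simp [expNegRemainder, truncExpPrev_succ_zero]

theorem hasDerivAt_expNegRemainder_succ (n : ℕ) (t : ℝ) :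
    HasDerivAt (expNegRemainder (n + 1)) (-expNegRemainder n t) t := by
  have h := (hasDerivAt_neg t).exp.sub
    ((hasDerivAt_truncExpPrev_succ n (-t)).comp t (hasDerivAt_neg t))
  refine h.congr_deriv ?_
  simp only [expNegRemainder]
  ring

theorem abs_expNegRemainder_le (n : ℕ) {t : ℝ} (ht : 0 ≤ t) :
    |expNegRemainder n t| ≤ t ^ n / n ! := by
  induction n generalizing t with
  | zero =>
    simpa [expNegRemainder, truncExpPrev, abs_of_pos (Real.exp_pos _)] using ht
  | succ n ih =>
    refine image_norm_le_of_norm_deriv_right_le_deriv_boundary (a := 0) (b := t)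
      (continuous_expNegRemainder _).continuousOn
      (fun x _ => (hasDerivAt_expNegRemainder_succ n x).hasDerivWithinAt)
      (by simp [expNegRemainder_succ_zero]) (hasDerivAt_pow_succ_div_factorial n)
      (fun x hx => by simpa using ih hx.1) ⟨ht, le_rfl⟩

theorem abs_expNegRemainder_mul_rpow_le (n : ℕ) (a : ℝ) {t : ℝ} (ht : 0 < t) :
    |expNegRemainder n t * t ^ a| ≤ t ^ (n + a) / n ! := by
  rw [abs_mul, abs_of_nonneg (Real.rpow_nonneg ht.le a), Real.rpow_add ht, Real.rpow_natCast,
    mul_div_right_comm]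
  exact mul_le_mul_of_nonneg_right (abs_expNegRemainder_le n ht.le) (Real.rpow_nonneg ht.le a)

theorem expNegRemainder_mul_rpow (n : ℕ) (a : ℝ) {t : ℝ} (ht : 0 < t) :
    expNegRemainder n t * t ^ a =
      Real.exp (-t) * t ^ a - ∑ k ∈ Finset.range n, (-1) ^ k / k ! * t ^ (k + a) := by
  simp only [expNegRemainder, truncExpPrev, sub_mul, Finset.sum_mul, Real.rpow_add ht,
    Real.rpow_natCast]
  congr 1
  refine Finset.sum_congr rfl fun k _ => ?_
  rw [neg_pow]
  ring

theorem continuousOn_expNegRemainder_mul_rpow (n : ℕ) (a : ℝ) :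
    ContinuousOn (fun t => expNegRemainder n t * t ^ a) (Ioi 0) :=
  (continuous_expNegRemainder n).continuousOn.mul
    fun t ht => (Real.continuousAt_rpow_const t a (Or.inl (ne_of_gt ht))).continuousWithinAt

theorem integrableOn_expNegRemainder_mul_rpow {n : ℕ} {s : ℝ} (h1 : -(n : ℝ) < s)
    (h2 : s < 1 - n) :
    IntegrableOn (fun t => expNegRemainder n t * t ^ (s - 1)) (Ioi 0) := by
  rw [← Ioc_union_Ioi_eq_Ioi zero_le_one]
  refine IntegrableOn.union ?_ ?_
  · have hdom : IntegrableOn (fun t : ℝ => t ^ (n + (s - 1)) / n !) (Ioc 0 1) :=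
      ((intervalIntegral.intervalIntegrable_rpow' (by linarith)).div_const _).1
    refine hdom.mono' (((continuousOn_expNegRemainder_mul_rpow n _).mono
      Ioc_subset_Ioi_self).aestronglyMeasurable measurableSet_Ioc) ?_
    filter_upwards [ae_restrict_mem measurableSet_Ioc] with t ht
    exact abs_expNegRemainder_mul_rpow_le n _ ht.1
  · have hexp : IntegrableOn (fun t => Real.exp (-t) * t ^ (s - 1)) (Ioi 1) := by
      refine ((Real.GammaIntegral_convergent one_pos).mono_set (Ioi_subset_Ioi zero_le_one)).mono'
        (by fun_prop) ?_
      filter_upwards [ae_restrict_mem measurableSet_Ioi] with t (ht : 1 < t)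
      have hs : s - 1 ≤ 1 - 1 := by linarith [(n.cast_nonneg : (0 : ℝ) ≤ n)]
      rw [norm_mul, Real.norm_of_nonneg (Real.exp_pos _).le,
        Real.norm_of_nonneg (Real.rpow_nonneg (zero_le_one.trans ht.le) _)]
      exact mul_le_mul_of_nonneg_left (Real.rpow_le_rpow_of_exponent_le ht.le hs)
        (Real.exp_pos _).le
    have hpow : ∀ k ∈ Finset.range n,
        IntegrableOn (fun t : ℝ => (-1) ^ k / k ! * t ^ (k + (s - 1))) (Ioi 1) := by
      intro k hk
      have : (k : ℝ) + 1 ≤ n := by exact_mod_cast Finset.mem_range.mp hk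
      exact (integrableOn_Ioi_rpow_of_lt (by linarith) one_pos).const_mul _
    refine (hexp.sub (integrable_finsetSum _ hpow)).congr_fun (fun t ht => ?_) measurableSet_Ioi
    exact (expNegRemainder_mul_rpow n _ (zero_lt_one.trans ht)).symm

theorem tendsto_expNegRemainder_mul_rpow_nhdsGT_zero (n : ℕ) {a : ℝ} (ha : -(n : ℝ) < a) :
    Tendsto (fun t => expNegRemainder n t * t ^ a) (𝓝[>] 0) (𝓝 0) := by
  have hbound : Tendsto (fun t : ℝ => t ^ (n + a) / n !) (𝓝[>] 0) (𝓝 0) := by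
    have := ((Real.continuousAt_rpow_const 0 (n + a) (Or.inr (by linarith))).tendsto.div_const
      (n ! : ℝ)).mono_left (nhdsWithin_le_nhds (s := Ioi 0))
    simpa [Real.zero_rpow (by linarith : (n : ℝ) + a ≠ 0)] using this
  refine squeeze_zero_norm' ?_ hbound
  filter_upwards [self_mem_nhdsWithin] with t (ht : 0 < t)
  exact abs_expNegRemainder_mul_rpow_le n a ht

theorem tendsto_expNegRemainder_succ_mul_rpow_atTop (n : ℕ) {s : ℝ} (hs : s < -n) :
    Tendsto (fun t => expNegRemainder (n + 1) t * t ^ s) atTop (𝓝 0) := by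
  have hexp : Tendsto (fun t : ℝ => Real.exp (-t) * t ^ s) atTop (𝓝 0) := by
    simpa [mul_comm] using tendsto_rpow_mul_exp_neg_mul_atTop_nhds_zero s 1 one_pos
  have hpow : Tendsto (fun t : ℝ => ∑ k ∈ Finset.range (n + 1), (-1) ^ k / k ! * t ^ (k + s))
      atTop (𝓝 0) := by
    rw [← Finset.sum_const_zero (s := Finset.range (n + 1))]
    refine tendsto_finsetSum _ fun k hk => ?_
    have : (k : ℝ) ≤ n := by exact_mod_cast Nat.lt_succ_iff.mp (Finset.mem_range.mp hk)
    simpa using (tendsto_rpow_neg_atTop (y := -(k + s)) (by linarith)).const_mul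
      ((-1 : ℝ) ^ k / k !)
  have h := hexp.sub hpow
  rw [sub_zero] at h
  refine h.congr' ?_
  filter_upwards [eventually_gt_atTop 0] with t ht
  exact (expNegRemainder_mul_rpow (n + 1) s ht).symm

theorem integral_expNegRemainder_mul_rpow_add_one (n : ℕ) {s : ℝ} (h1 : -(n : ℝ) - 1 < s)
    (h2 : s < -n) :
    ∫ t in Ioi 0, expNegRemainder n t * t ^ (s + 1 - 1) =
      s * ∫ t in Ioi 0, expNegRemainder (n + 1) t * t ^ (s - 1) := by
  have hint : IntegrableOn (fun t => -(expNegRemainder n t * t ^ (s + 1 - 1))) (Ioi 0) :=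
    (integrableOn_expNegRemainder_mul_rpow (by linarith) (by linarith)).neg
  have hint_succ :
      IntegrableOn (fun t => s * (expNegRemainder (n + 1) t * t ^ (s - 1))) (Ioi 0) :=
    (integrableOn_expNegRemainder_mul_rpow (by push_cast; linarith)
      (by push_cast; linarith)).const_mul s
  have hderiv : ∀ t ∈ Ioi (0 : ℝ), HasDerivAt (fun t => expNegRemainder (n + 1) t * t ^ s)
      (-(expNegRemainder n t * t ^ (s + 1 - 1)) +
        s * (expNegRemainder (n + 1) t * t ^ (s - 1))) t := by
    intro t ht
    refine ((hasDerivAt_expNegRemainder_succ n t).mul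
      (Real.hasDerivAt_rpow_const (Or.inl (ne_of_gt ht)))).congr_deriv ?_
    rw [add_sub_cancel_right]
    ring
  have hcont : ContinuousWithinAt (fun t => expNegRemainder (n + 1) t * t ^ s) (Ici 0) 0 := by
    rw [← continuousWithinAt_Ioi_iff_Ici]
    simp only [ContinuousWithinAt, expNegRemainder_succ_zero, zero_mul]
    exact tendsto_expNegRemainder_mul_rpow_nhdsGT_zero (n + 1) (by push_cast; linarith)
  have h := integral_Ioi_of_hasDerivAt_of_tendsto hcont hderiv
    (hint.add hint_succ) (tendsto_expNegRemainder_succ_mul_rpow_atTop n h2)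
  rw [integral_add hint hint_succ, integral_neg, integral_const_mul,
    expNegRemainder_succ_zero, zero_mul, sub_zero] at h
  linarith

theorem integral_expNegRemainder_mul_rpow_eq_Gamma (n : ℕ) {s : ℝ} (h1 : -(n : ℝ) < s)
    (h2 : s < 1 - n) :
    ∫ t in Ioi 0, expNegRemainder n t * t ^ (s - 1) = Real.Gamma s := by
  induction n generalizing s with
  | zero =>
    rw [Real.Gamma_eq_integral (by simpa using h1)]
    simp [expNegRemainder, truncExpPrev]
  | succ n ih =>
    push_cast at h1 h2
    have hs : s ≠ 0 := by linarith [(n.cast_nonneg : (0 : ℝ) ≤ n)]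
    have h := integral_expNegRemainder_mul_rpow_add_one n (s := s) (by linarith) (by linarith)
    rw [ih (by linarith) (by linarith), Real.Gamma_add_one hs] at h
    exact (mul_left_cancel₀ hs h).symm

theorem neg_ofReal_cpow_ofReal {t : ℝ} (ht : 0 ≤ t) (y : ℝ) :
    (-(t : ℂ)) ^ (y : ℂ) = ((t ^ y : ℝ) : ℂ) * exp ((π * y : ℝ) * I) := by
  rw [← ofReal_neg, ofReal_cpow_of_nonpos (by linarith), ofReal_neg, neg_neg, ← ofReal_cpow ht]
  push_cast
  ring_nf

theorem integral_expNegRemainder_mul_neg_cpow {n : ℕ} {z : ℝ} (h1 : (n : ℝ) < z)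
    (h2 : z < n + 1) :
    ∫ t in Ioi 0, (expNegRemainder n t : ℂ) * (-(t : ℂ)) ^ (-(z : ℂ)) =
      (Real.Gamma (1 - z) : ℂ) * exp ((-(π * z) : ℝ) * I) := by
  have h : ∀ t ∈ Ioi (0 : ℝ), (expNegRemainder n t : ℂ) * (-(t : ℂ)) ^ (-(z : ℂ)) =
      ((expNegRemainder n t * t ^ ((1 - z) - 1) : ℝ) : ℂ) * exp ((-(π * z) : ℝ) * I) := by
    intro t ht
    rw [← ofReal_neg z, neg_ofReal_cpow_ofReal (le_of_lt ht), sub_sub_cancel_left]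
    push_cast
    ring_nf
  rw [setIntegral_congr_fun measurableSet_Ioi h, integral_mul_const, integral_complex_ofReal,
    integral_expNegRemainder_mul_rpow_eq_Gamma n (by linarith) (by linarith)]

/-- For non-integer `z > 0` with `n = ⌊z⌋`,
`1/Γ(z) = -(1/π) · Im ∫₀^∞ (e^{-t} - e_{n-1}(-t)) (-t)^{-z} dt`,
where `(-t)^{-z}` is the principal branch complex power. -/
theorem reciprocal_Gamma_imaginary_part_rep (z : ℝ) (hz : 0 < z)
    (hnint : ∀ m : ℤ, z ≠ (m : ℝ)) :
    1 / Real.Gamma z = -(1 / π) *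
      (∫ t in Set.Ioi (0 : ℝ),
        ((Real.exp (-t) - truncExpPrev ⌊z⌋₊ (-t) : ℝ) : ℂ) * (-(t : ℂ)) ^ (-(z : ℂ))).im := by
  have hfloor : (⌊z⌋₊ : ℝ) < z :=
    (Nat.floor_le hz.le).lt_of_ne fun h => hnint ⌊z⌋₊ (by exact_mod_cast h.symm)
  have hsin : Real.sin (π * z) ≠ 0 :=
    Real.sin_ne_zero_iff.mpr fun m hm =>
      hnint m (mul_right_cancel₀ Real.pi_ne_zero (mul_comm π z ▸ hm)).symm
  have hI := integral_expNegRemainder_mul_neg_cpow hfloor (Nat.lt_floor_add_one z)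
  simp only [expNegRemainder] at hI
  have hrefl := Real.Gamma_mul_Gamma_one_sub z
  rw [hI, im_ofReal_mul, exp_ofReal_mul_I_im, Real.sin_neg]
  rw [eq_div_iff hsin] at hrefl
  field_simp
  linear_combination -hrefl
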